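/- arXiv:0804.4814 — 3 statements merged into one kernel-verified Lean document; each statement's English description precedes it below -/
import Mathlib

section
/- Fix an integer d \ge 2 and set \rho = 4(d-1)/d^2. For complex \lambda with 0 < |\lambda| < 1, define s = \sqrt{1 - \rho\lambda^2} (principal branch), a_\lambda = d(1 - s)/(2(d-1)\lambda), and b_\lambda = (1 - \lambda a_\lambda)^{-1}; similarly for \mu with t = \sqrt{1-\rho\mu^2}. Then the series 2d \sum_{r=1}^{\infty} (d-1)^{r-1} \big( b_\lambda (1 - a_\lambda^2) a_\lambda^{r-1} \big)^2 \big( b_\mu (1 - a_\mu^2) a_\mu^{r-1} \big)^2 converges absolutely and equals \frac{32 (d-1) d}{(1+s)(1+t)\big( (d-2)(1+s)(1+t) + 2(s+t) \big)}. -/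
/-!
Since `ρd² = 4(d-1)`, the principal root `s = √(1 - ρλ²)` satisfies `4(d-1)λ² = d²(1-s²)`, and
it has positive real part. This relation collapses the Green-function parameters to
`a_λ = 2λ/(d(1+s))`, `b_λ(1-a_λ²) = 2/(1+s)` and `(d-1)a_λ² = (1-s)/(1+s)`, so the series is
geometric with ratio `q = (1-s)/(1+s) · (1-t)/(1+t) / (d-1)`. Positive real parts give
`|1-s| < |1+s|`, hence `|q| < 1`, and summing uses
`(d-1)(1+s)(1+t) - (1-s)(1-t) = (d-2)(1+s)(1+t) + 2(s+t)`.
-/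

open Complex

namespace Complex

lemma re_cpow_inv_two_pos {z : ℂ} (hz : z ∈ slitPlane) : 0 < (z ^ (2⁻¹ : ℂ)).re := by
  rw [cpow_inv_two_re, Real.sqrt_pos]
  rcases mem_slitPlane_iff.1 hz with hre | him
  · linarith [norm_nonneg z]
  · linarith [neg_abs_le z.re, abs_re_lt_norm.2 him]

lemma one_sub_ofReal_mul_sq_mem_slitPlane {ρ : ℝ} (hρ : |ρ| ≤ 1) {w : ℂ} (hw : ‖w‖ < 1) :
    1 - ρ * w ^ 2 ∈ slitPlane := by
  rw [sub_eq_add_neg]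
  apply mem_slitPlane_of_norm_lt_one
  rw [norm_neg, norm_mul, norm_real, Real.norm_eq_abs, norm_pow]
  calc |ρ| * ‖w‖ ^ 2 ≤ 1 * ‖w‖ ^ 2 := by gcongr
    _ < 1 := by nlinarith [norm_nonneg w]

lemma norm_one_sub_lt_norm_one_add {s : ℂ} (hs : 0 < s.re) : ‖1 - s‖ < ‖1 + s‖ := by
  rw [← sq_lt_sq₀ (norm_nonneg _) (norm_nonneg _), Complex.sq_norm, Complex.sq_norm,
    normSq_apply, normSq_apply]
  simp only [sub_re, add_re, sub_im, add_im, one_re, one_im]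
  nlinarith

lemma one_add_ne_zero_of_re_pos {s : ℂ} (hs : 0 < s.re) : 1 + s ≠ 0 :=
  ne_zero_of_re_pos (by simpa using add_pos one_pos hs)

lemma norm_one_sub_div_one_add_lt_one {s : ℂ} (hs : 0 < s.re) : ‖(1 - s) / (1 + s)‖ < 1 := by
  rw [norm_div, div_lt_one (norm_pos_iff.2 (one_add_ne_zero_of_re_pos hs))]
  exact norm_one_sub_lt_norm_one_add hs

end Complex

lemma abs_four_mul_sub_one_div_sq_le_one {x : ℝ} (hx : 1 ≤ x) : |4 * (x - 1) / x ^ 2| ≤ 1 := by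
  rw [abs_of_nonneg (div_nonneg (by linarith) (sq_nonneg x)), div_le_one (by positivity)]
  nlinarith [sq_nonneg (x - 2)]

lemma norm_mul_div_lt_one {K : Type*} [NormedDivisionRing K] {x y m : K}
    (hx : ‖x‖ < 1) (hy : ‖y‖ < 1) (hm : 1 ≤ ‖m‖) :
    ‖x * y / m‖ < 1 := by
  rw [norm_div, norm_mul, div_lt_one (by linarith)]
  nlinarith [norm_nonneg x, norm_nonneg y]

section TreeGreenParameters

variable {d : ℕ} {lam s a : ℂ}

lemma one_le_norm_natCast_sub_one (hd : 2 ≤ d) : 1 ≤ ‖(d : ℂ) - 1‖ := by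
  rw [← Nat.cast_pred (by omega), norm_natCast]
  exact_mod_cast (by omega : 1 ≤ d - 1)

lemma natCast_sub_one_ne_zero (hd : 2 ≤ d) : (d : ℂ) - 1 ≠ 0 :=
  norm_pos_iff.1 (one_pos.trans_le (one_le_norm_natCast_sub_one hd))

lemma tree_sqrt_re_pos_and_relation (hd : 2 ≤ d) {ρ : ℝ} (hρ : ρ = 4 * ((d : ℝ) - 1) / (d : ℝ) ^ 2)
    (hlam : ‖lam‖ < 1) (hs : s = ((1 : ℂ) - (ρ : ℂ) * lam ^ 2) ^ ((1 : ℂ) / 2)) :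
    0 < s.re ∧ 4 * ((d : ℂ) - 1) * lam ^ 2 = d ^ 2 * (1 - s ^ 2) := by
  have hdR : (2 : ℝ) ≤ d := by exact_mod_cast hd
  have hρ_le : |ρ| ≤ 1 := hρ ▸ abs_four_mul_sub_one_div_sq_le_one (by linarith)
  rw [one_div] at hs
  refine ⟨hs ▸ re_cpow_inv_two_pos (one_sub_ofReal_mul_sq_mem_slitPlane hρ_le hlam), ?_⟩
  have hd0 : (d : ℂ) ≠ 0 := Nat.cast_ne_zero.2 (by omega)
  rw [hs, cpow_ofNat_inv_pow, hρ]
  push_cast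
  field_simp
  ring

lemma tree_green_a_eq (hd : 2 ≤ d) (hlam : lam ≠ 0) (hs : 0 < s.re)
    (hkey : 4 * ((d : ℂ) - 1) * lam ^ 2 = d ^ 2 * (1 - s ^ 2))
    (ha : a = d * (1 - s) / (2 * ((d : ℂ) - 1) * lam)) :
    a = 2 * lam / (d * (1 + s)) := by
  have hd0 : (d : ℂ) ≠ 0 := Nat.cast_ne_zero.2 (by omega)
  have hd1 := natCast_sub_one_ne_zero hd
  have hs1 := one_add_ne_zero_of_re_pos hs
  rw [ha, div_eq_div_iff (by simp [hd1, hlam]) (by simp [hd0, hs1])]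
  linear_combination -hkey

lemma tree_green_sub_one_mul_a_sq (hd : 2 ≤ d) (hlam : lam ≠ 0) (hs : 0 < s.re)
    (hkey : 4 * ((d : ℂ) - 1) * lam ^ 2 = d ^ 2 * (1 - s ^ 2))
    (ha : a = d * (1 - s) / (2 * ((d : ℂ) - 1) * lam)) :
    ((d : ℂ) - 1) * a ^ 2 = (1 - s) / (1 + s) := by
  have hd0 : (d : ℂ) ≠ 0 := Nat.cast_ne_zero.2 (by omega)
  have hs1 := one_add_ne_zero_of_re_pos hs
  rw [tree_green_a_eq hd hlam hs hkey ha]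
  field_simp
  linear_combination hkey

lemma tree_green_b_mul_one_sub_a_sq (hd : 2 ≤ d) (hlam : lam ≠ 0) (hs : 0 < s.re)
    (hkey : 4 * ((d : ℂ) - 1) * lam ^ 2 = d ^ 2 * (1 - s ^ 2))
    (ha : a = d * (1 - s) / (2 * ((d : ℂ) - 1) * lam)) :
    (1 - lam * a)⁻¹ * (1 - a ^ 2) = 2 / (1 + s) := by
  have hd0 : (d : ℂ) ≠ 0 := Nat.cast_ne_zero.2 (by omega)
  have hd1 := natCast_sub_one_ne_zero hd
  have hs1 := one_add_ne_zero_of_re_pos hs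
  have hds : (d : ℂ) - 2 + d * s ≠ 0 := by
    have hdR : (2 : ℝ) ≤ d := by exact_mod_cast hd
    refine ne_zero_of_re_pos ?_
    simp only [sub_re, add_re, mul_re, natCast_re, natCast_im, zero_mul, sub_zero]
    norm_num
    nlinarith
  have hla : 1 - lam * a = ((d : ℂ) - 2 + d * s) / (2 * ((d : ℂ) - 1)) := by
    rw [tree_green_a_eq hd hlam hs hkey ha]
    field_simp
    linear_combination -hkey
  rw [hla, inv_div, tree_green_a_eq hd hlam hs hkey ha]
  field_simp
  linear_combination -hkey

end TreeGreenParameters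

lemma mul_pow_mul_sq_mul_sq {R : Type*} [CommSemiring R] (k m B a C c : R) (r : ℕ) :
    k * m ^ r * (B * a ^ r) ^ 2 * (C * c ^ r) ^ 2 =
      k * B ^ 2 * C ^ 2 * (m * a ^ 2 * c ^ 2) ^ r := by
  ring

lemma tree_green_closed_form {K : Type*} [Field K] {d s t : K} (hd : d - 1 ≠ 0)
    (hs : 1 + s ≠ 0) (ht : 1 + t ≠ 0)
    (hq : 1 - (1 - s) / (1 + s) * ((1 - t) / (1 + t)) / (d - 1) ≠ 0) :
    2 * d * (2 / (1 + s)) ^ 2 * (2 / (1 + t)) ^ 2 *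
        (1 - (1 - s) / (1 + s) * ((1 - t) / (1 + t)) / (d - 1))⁻¹ =
      32 * (d - 1) * d / ((1 + s) * (1 + t) * ((d - 2) * (1 + s) * (1 + t) + 2 * (s + t))) := by
  have hsub : 1 - (1 - s) / (1 + s) * ((1 - t) / (1 + t)) / (d - 1) =
      ((d - 2) * (1 + s) * (1 + t) + 2 * (s + t)) / ((d - 1) * (1 + s) * (1 + t)) := by
    field_simp
    ring
  have hD : (d - 2) * (1 + s) * (1 + t) + 2 * (s + t) ≠ 0 := by
    rintro h
    rw [hsub, h, zero_div] at hq
    exact hq rfl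
  rw [hsub, inv_div]
  field_simp
  ring

/-- Summation of the Green-function series on the `d`-regular tree:
`2d ∑_{r≥1} (d-1)^{r-1} (b_λ(1-a_λ²)a_λ^{r-1})² (b_μ(1-a_μ²)a_μ^{r-1})²
 = 32(d-1)d / ((1+s)(1+t)((d-2)(1+s)(1+t)+2(s+t)))`,
with `s = √(1-ρλ²)`, `t = √(1-ρμ²)` (principal branch) and the series converging
absolutely.  Below, the index `r : ℕ` plays the role of `r - 1`. -/
theorem tree_green_series_sum
    (d : ℕ) (hd : 2 ≤ d)
    (ρ : ℝ) (hρ : ρ = 4 * ((d : ℝ) - 1) / (d : ℝ) ^ 2)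
    (lam mu : ℂ) (hlam0 : lam ≠ 0) (hlam : ‖lam‖ < 1)
    (hmu0 : mu ≠ 0) (hmu : ‖mu‖ < 1)
    (s t : ℂ)
    (hs : s = ((1 : ℂ) - (ρ : ℂ) * lam ^ 2) ^ ((1 : ℂ) / 2))
    (ht : t = ((1 : ℂ) - (ρ : ℂ) * mu ^ 2) ^ ((1 : ℂ) / 2))
    (alam amu blam bmu : ℂ)
    (halam : alam = (d : ℂ) * (1 - s) / (2 * ((d : ℂ) - 1) * lam))
    (hamu : amu = (d : ℂ) * (1 - t) / (2 * ((d : ℂ) - 1) * mu))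
    (hblam : blam = (1 - lam * alam)⁻¹)
    (hbmu : bmu = (1 - mu * amu)⁻¹) :
    Summable (fun r : ℕ =>
      ‖(2 * (d : ℂ) * ((d : ℂ) - 1) ^ r *
        (blam * (1 - alam ^ 2) * alam ^ r) ^ 2 *
        (bmu * (1 - amu ^ 2) * amu ^ r) ^ 2)‖) ∧
    (∑' r : ℕ, 2 * (d : ℂ) * ((d : ℂ) - 1) ^ r *
        (blam * (1 - alam ^ 2) * alam ^ r) ^ 2 *
        (bmu * (1 - amu ^ 2) * amu ^ r) ^ 2) =
      32 * ((d : ℂ) - 1) * (d : ℂ) /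
        ((1 + s) * (1 + t) * (((d : ℂ) - 2) * (1 + s) * (1 + t) + 2 * (s + t))) := by
  obtain ⟨hs_re, hkey_s⟩ := tree_sqrt_re_pos_and_relation hd hρ hlam hs
  obtain ⟨ht_re, hkey_t⟩ := tree_sqrt_re_pos_and_relation hd hρ hmu ht
  set q : ℂ := (1 - s) / (1 + s) * ((1 - t) / (1 + t)) / ((d : ℂ) - 1) with hq_def
  have hq : ‖q‖ < 1 :=
    norm_mul_div_lt_one (norm_one_sub_div_one_add_lt_one hs_re)
      (norm_one_sub_div_one_add_lt_one ht_re) (one_le_norm_natCast_sub_one hd)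
  have hratio : ((d : ℂ) - 1) * alam ^ 2 * amu ^ 2 = q := by
    rw [hq_def, ← tree_green_sub_one_mul_a_sq hd hlam0 hs_re hkey_s halam,
      ← tree_green_sub_one_mul_a_sq hd hmu0 ht_re hkey_t hamu]
    field_simp
  have hsum : HasSum (fun r : ℕ ↦ 2 * (d : ℂ) * ((d : ℂ) - 1) ^ r *
      (blam * (1 - alam ^ 2) * alam ^ r) ^ 2 * (bmu * (1 - amu ^ 2) * amu ^ r) ^ 2)
      (2 * d * (2 / (1 + s)) ^ 2 * (2 / (1 + t)) ^ 2 * (1 - q)⁻¹) := by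
    simp only [mul_pow_mul_sq_mul_sq, hratio, hblam, hbmu,
      tree_green_b_mul_one_sub_a_sq hd hlam0 hs_re hkey_s halam,
      tree_green_b_mul_one_sub_a_sq hd hmu0 ht_re hkey_t hamu]
    exact (hasSum_geometric_of_norm_lt_one hq).mul_left _
  refine ⟨summable_norm_iff.2 hsum.summable, hsum.tsum_eq.trans ?_⟩
  have hq1 : 1 - q ≠ 0 := sub_ne_zero.2 (ne_of_apply_ne norm (by rw [norm_one]; exact hq.ne'))
  exact tree_green_closed_form (natCast_sub_one_ne_zero hd) (one_add_ne_zero_of_re_pos hs_re)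
    (one_add_ne_zero_of_re_pos ht_re) hq1
end

section
/- Let d be a real number with d > 2 and let s, t be complex numbers with Re(s) \ge 0 and Re(t) \ge 0. Then (d-2)(1+s)(1+t) + 2(s+t) \ne 0. -/
/-! The identity `2(s + t) = (1 + s)(1 + t) - (1 - s)(1 - t)` rewrites the expression as
`(d - 1)(1 + s)(1 + t) - (1 - s)(1 - t)`. On the closed right half-plane `|1 - z| ≤ |1 + z|`
and `1 + z ≠ 0`, so the subtracted term is strictly smaller in modulus than the first one,
because `d - 1 > 1`. -/

open InnerProductSpace

theorem norm_sub_le_norm_add_of_inner_nonneg {F : Type*} [NormedAddCommGroup F]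
    [InnerProductSpace ℝ F] {x y : F} (h : 0 ≤ ⟪x, y⟫_ℝ) : ‖x - y‖ ≤ ‖x + y‖ := by
  refine (pow_le_pow_iff_left₀ (norm_nonneg _) (norm_nonneg _) two_ne_zero).mp ?_
  rw [norm_sub_sq_real, norm_add_sq_real]
  linarith

namespace Complex

theorem norm_one_sub_le_norm_one_add {z : ℂ} (hz : 0 ≤ z.re) : ‖1 - z‖ ≤ ‖1 + z‖ :=
  norm_sub_le_norm_add_of_inner_nonneg (by simpa [Complex.inner] using hz)

theorem one_add_ne_zero_of_re_nonneg {z : ℂ} (hz : 0 ≤ z.re) : 1 + z ≠ 0 := by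
  intro h
  have := congrArg re h
  simp only [add_re, one_re, zero_re] at this
  linarith

end Complex

theorem sub_ne_zero_of_norm_lt {E : Type*} [AddGroup E] [Norm E] {x y : E}
    (h : ‖y‖ < ‖x‖) : x - y ≠ 0 :=
  sub_ne_zero.mpr fun hxy => h.ne' (congrArg norm hxy)

/-- For real `d > 2` and complex `s, t` with nonnegative real parts,
`(d-2)(1+s)(1+t) + 2(s+t) ≠ 0`. -/
theorem denominator_ne_zero (d : ℝ) (hd : 2 < d) (s t : ℂ)
    (hs : 0 ≤ s.re) (ht : 0 ≤ t.re) :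
    ((d : ℂ) - 2) * (1 + s) * (1 + t) + 2 * (s + t) ≠ 0 := by
  have hsplit : ((d : ℂ) - 2) * (1 + s) * (1 + t) + 2 * (s + t)
      = ((d - 1 : ℝ) : ℂ) * ((1 + s) * (1 + t)) - (1 - s) * (1 - t) := by
    push_cast; ring
  have hpos : 0 < ‖(1 + s) * (1 + t)‖ := norm_pos_iff.mpr <|
    mul_ne_zero (Complex.one_add_ne_zero_of_re_nonneg hs) (Complex.one_add_ne_zero_of_re_nonneg ht)
  rw [hsplit]
  refine sub_ne_zero_of_norm_lt ?_
  calc ‖(1 - s) * (1 - t)‖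
      ≤ ‖(1 + s) * (1 + t)‖ := by
        rw [norm_mul, norm_mul]
        exact mul_le_mul (Complex.norm_one_sub_le_norm_one_add hs)
          (Complex.norm_one_sub_le_norm_one_add ht) (norm_nonneg _) (norm_nonneg _)
    _ < (d - 1) * ‖(1 + s) * (1 + t)‖ := lt_mul_left hpos (by linarith)
    _ = ‖((d - 1 : ℝ) : ℂ) * ((1 + s) * (1 + t))‖ := by
        rw [norm_mul ((d - 1 : ℝ) : ℂ), Complex.norm_real, Real.norm_of_nonneg (by linarith)]
end

section
/- For complex u, v \in \mathbb{C} \setminus [0,1] with u \ne v or u = v, set s = \sqrt{1 - 1/u} and t = \sqrt{1 - 1/v} (principal branch). Then \frac{32}{uv\,(1+s)(1+t)(s+t)} = \frac{32}{\pi} \int_0^1 \frac{\sqrt{x(1-x)}}{(x-u)(x-v)}\, dx. -/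
/-!
Parametrise by `s`: `u = 1 / (1 - s²)` with `0 < re s`. With
`L(x) = log (s√x + i√(1-x)) - log (s√x - i√(1-x))` one has
`L' = i s u / (√(x(1-x)) (x - u))`, so `√(x(1-x)) + (1/2 - u) arcsin (2x - 1) + i s u L` is
an antiderivative of `√(x(1-x)) / (x - u)`, and
`-√(x(1-x)) / (x - u) - arcsin (2x - 1) + i (1 + s²) / (2s) L` one of `√(x(1-x)) / (x - u)²`.
From `L 0 = iπ`, `L 1 = 0` the two integrals over `[0, 1]` are `π (s - 1) / (2 (1 + s))` and
`π (1 - s)² / (2s)`. Partial fractions (for `u ≠ v`) or the double-pole formula (for `u = v`)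
then reduce the identity to one between rational functions of `s` and `t`.
-/

open Complex Set Real intervalIntegral
open scoped ComplexOrder Interval

theorem one_sub_one_div_mem_slitPlane {u : ℂ} (hu : u ∉ ofReal '' Icc 0 1) :
    1 - 1 / u ∈ slitPlane := by
  rw [mem_slitPlane_iff_not_le_zero, sub_nonpos]
  intro h
  obtain ⟨hre, him⟩ := Complex.le_def.1 h
  have hreal : 1 / u = ((1 / u).re : ℂ) := Complex.ext rfl (by simpa using him.symm)
  have hre' : 1 ≤ (1 / u).re := by simpa using hre
  refine hu ⟨((1 / u).re)⁻¹, ⟨by positivity, inv_le_one_of_one_le₀ hre'⟩, ?_⟩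
  rw [ofReal_inv, ← hreal, one_div, inv_inv]

theorem re_cpow_one_half_pos {z : ℂ} (hz : z ∈ slitPlane) : 0 < (z ^ (1 / 2 : ℂ)).re := by
  rw [one_div, cpow_inv_two_re, Real.sqrt_pos]
  rcases mem_slitPlane_iff.1 hz with h | h
  · linarith [norm_nonneg z]
  · linarith [neg_abs_le z.re, abs_re_lt_norm.2 h]

theorem notMem_image_ofReal_Icc_of_mul_one_sub_sq_eq_one {s u : ℂ} (hs : 0 < s.re)
    (hus : u * (1 - s ^ 2) = 1) : u ∉ ofReal '' Icc 0 1 := by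
  rintro ⟨x, ⟨hx0, hx1⟩, rfl⟩
  have hre := congrArg re hus
  have him := congrArg im hus
  simp only [mul_re, mul_im, ofReal_re, ofReal_im, sub_re, sub_im, one_re, one_im, sq] at hre him
  have him' : x * (s.re * s.im) = 0 := by linarith
  rcases mul_eq_zero.1 him' with rfl | h
  · simp at hre
  · rcases mul_eq_zero.1 h with h | h
    · linarith
    · rw [h] at hre
      have hx : x = 1 := by nlinarith [mul_nonneg hx0 (mul_pos hs hs).le]
      subst hx
      nlinarith [mul_pos hs hs]

theorem mul_sqrt_add_mul_sqrt_one_sub_mem_slitPlane {s w : ℂ} (hs : 0 < s.re) (hw_re : w.re = 0)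
    (hw : w ≠ 0) {x : ℝ} (hx : x ∈ Icc 0 1) : s * √x + w * √(1 - x) ∈ slitPlane := by
  rw [mem_slitPlane_iff]
  rcases hx.1.eq_or_lt with rfl | hx0
  · right
    simpa [hw_re] using fun h => hw (Complex.ext hw_re h)
  · left
    simpa [hw_re] using mul_pos hs (Real.sqrt_pos.2 hx0)

theorem mul_sqrt_sub_I_mul_sqrt_one_sub_mem_slitPlane {s : ℂ} (hs : 0 < s.re) {x : ℝ}
    (hx : x ∈ Icc 0 1) : s * √x - I * √(1 - x) ∈ slitPlane := by
  simpa [sub_eq_add_neg] using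
    mul_sqrt_add_mul_sqrt_one_sub_mem_slitPlane hs (w := -I) (by simp) (by simp) hx

/-- For real `s > 0` this is `2i · arctan (√(1 - x) / (s √x))`; the logarithmic form makes
sense for `0 < re s` and stays continuous at `x = 0`. -/
noncomputable def logQuot (s : ℂ) (x : ℝ) : ℂ :=
  log (s * √x + I * √(1 - x)) - log (s * √x - I * √(1 - x))

theorem continuousOn_logQuot {s : ℂ} (hs : 0 < s.re) :
    ContinuousOn (logQuot s) (Icc 0 1) := by
  refine ContinuousOn.sub (ContinuousOn.clog (by fun_prop) fun x hx => ?_)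
    (ContinuousOn.clog (by fun_prop) fun x hx => ?_)
  · exact mul_sqrt_add_mul_sqrt_one_sub_mem_slitPlane hs (by simp) I_ne_zero hx
  · exact mul_sqrt_sub_I_mul_sqrt_one_sub_mem_slitPlane hs hx

theorem logQuot_zero (s : ℂ) : logQuot s 0 = π * I := by
  simp [logQuot, log_I, log_neg_I]
  ring

theorem logQuot_one (s : ℂ) : logQuot s 1 = 0 := by
  simp [logQuot]

theorem hasDerivAt_sqrt_mul_one_sub {x : ℝ} (hx : x ∈ Ioo 0 1) :
    HasDerivAt (fun y => √(y * (1 - y))) ((1 - 2 * x) / (2 * √(x * (1 - x)))) x := by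
  have h : HasDerivAt (fun y : ℝ => y * (1 - y)) (1 - 2 * x) x :=
    ((hasDerivAt_id' x).fun_mul ((hasDerivAt_id' x).const_sub 1)).congr_deriv (by ring)
  exact h.sqrt (by nlinarith [hx.1, hx.2])

theorem hasDerivAt_arcsin_two_mul_sub_one {x : ℝ} (hx : x ∈ Ioo 0 1) :
    HasDerivAt (fun y => arcsin (2 * y - 1)) (1 / √(x * (1 - x))) x := by
  have h := (Real.hasDerivAt_arcsin (x := 2 * x - 1) (by linarith [hx.1]) (by linarith [hx.2])).comp
    x (((hasDerivAt_id x).const_mul 2).sub_const 1)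
  refine h.congr_deriv ?_
  rw [show 1 - (2 * x - 1) ^ 2 = 2 ^ 2 * (x * (1 - x)) by ring, Real.sqrt_mul (by norm_num),
    Real.sqrt_sq (by norm_num)]
  field_simp

theorem hasDerivAt_logQuot {s : ℂ} (hs : 0 < s.re) {x : ℝ} (hx : x ∈ Ioo 0 1) :
    HasDerivAt (logQuot s) (I * s / (√(x * (1 - x)) * ((1 - s ^ 2) * x - 1))) x := by
  have hx' : x ∈ Icc 0 1 := Ioo_subset_Icc_self hx
  have hP := mul_sqrt_add_mul_sqrt_one_sub_mem_slitPlane hs (by simp) I_ne_zero hx'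
  have hQ := mul_sqrt_sub_I_mul_sqrt_one_sub_mem_slitPlane hs hx'
  have ha := (Real.hasDerivAt_sqrt hx.1.ne').ofReal_comp
  have hb :=
    (((hasDerivAt_id' x).const_sub 1).sqrt (by linarith [hx.2] : 1 - x ≠ 0)).ofReal_comp
  refine ((((ha.const_mul s).add (hb.const_mul I)).clog_real hP).sub
    (((ha.const_mul s).sub (hb.const_mul I)).clog_real hQ)).congr_deriv ?_
  have hA : (√x : ℂ) ≠ 0 := ofReal_ne_zero.2 (Real.sqrt_pos.2 hx.1).ne'
  have hB : (√(1 - x) : ℂ) ≠ 0 := ofReal_ne_zero.2 (Real.sqrt_pos.2 (by linarith [hx.2])).ne'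
  have hA2 : ((√x : ℝ) : ℂ) ^ 2 = x := by norm_cast; exact Real.sq_sqrt hx.1.le
  have hB2 : ((√(1 - x) : ℝ) : ℂ) ^ 2 = 1 - x := by
    norm_cast; exact Real.sq_sqrt (by linarith [hx.2])
  have hPQ :
      (s * √x + I * √(1 - x)) * (s * √x - I * √(1 - x)) = -((1 - s ^ 2) * x - 1) := by
    linear_combination s ^ 2 * hA2 + hB2 - (√(1 - x) : ℂ) ^ 2 * I_sq
  have hP0 := slitPlane_ne_zero hP
  have hQ0 := slitPlane_ne_zero hQ
  have hD : (1 - s ^ 2) * x - 1 ≠ 0 := fun h => mul_ne_zero hP0 hQ0 (by rw [hPQ, h, neg_zero])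
  rw [Real.sqrt_mul hx.1.le]
  simp only [Pi.add_apply, Pi.sub_apply]
  push_cast
  field_simp
  linear_combination (-2 * s * I * ((1 - s ^ 2) * x - 1)) * (hA2 + hB2) - 2 * s * I * hPQ

theorem intervalIntegrable_div_sub_pow {f : ℝ → ℂ} (hf : Continuous f) {a b : ℝ} {u : ℂ}
    (hu : u ∉ ofReal '' [[a, b]]) (n : ℕ) :
    IntervalIntegrable (fun x => f x / (x - u) ^ n) MeasureTheory.volume a b :=
  ContinuousOn.intervalIntegrable <| hf.continuousOn.div (by fun_prop) fun x hx =>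
    pow_ne_zero n (sub_ne_zero.2 fun h => hu ⟨x, hx, h⟩)

theorem integral_sqrt_mul_one_sub_div_sub {s u : ℂ} (hs : 0 < s.re)
    (hus : u * (1 - s ^ 2) = 1) :
    ∫ x in (0 : ℝ)..1, (√(x * (1 - x)) : ℂ) / (x - u) = π * (s - 1) / (2 * (1 + s)) := by
  have hu := notMem_image_ofReal_Icc_of_mul_one_sub_sq_eq_one hs hus
  have hu0 : u ≠ 0 := left_ne_zero_of_mul_eq_one hus
  have hs1 : 1 + s ≠ 0 := ne_zero_of_re_pos (by rw [add_re, one_re]; linarith)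
  rw [integral_eq_sub_of_hasDerivAt_of_le zero_le_one
    (f := fun x =>
      (√(x * (1 - x)) : ℂ) + (1 / 2 - u) * arcsin (2 * x - 1) + I * s * u * logQuot s x)
    ?_ ?_ (by simpa using
      intervalIntegrable_div_sub_pow (by fun_prop) (by rwa [uIcc_of_le zero_le_one]) 1)]
  · norm_num [logQuot_zero, logQuot_one]
    field_simp
    linear_combination (-4) * hus + (-4 * u * s - 4 * u * s ^ 2) * I_sq
  · exact ((by fun_prop : Continuous _).continuousOn).add ((continuousOn_logQuot hs).const_mul _)
  · intro x hx
    refine (((hasDerivAt_sqrt_mul_one_sub hx).ofReal_comp.add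
      ((hasDerivAt_arcsin_two_mul_sub_one hx).ofReal_comp.const_mul (1 / 2 - u))).add
      ((hasDerivAt_logQuot hs hx).const_mul (I * s * u))).congr_deriv ?_
    have hR : (√(x * (1 - x)) : ℂ) ≠ 0 :=
      ofReal_ne_zero.2 (Real.sqrt_pos.2 (by nlinarith [hx.1, hx.2])).ne'
    have hR2 : ((√(x * (1 - x)) : ℝ) : ℂ) ^ 2 = x * (1 - x) := by
      norm_cast; exact Real.sq_sqrt (by nlinarith [hx.1, hx.2])
    have hxu : (x : ℂ) - u ≠ 0 := sub_ne_zero.2 fun h => hu ⟨x, Ioo_subset_Icc_self hx, h⟩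
    have hD : (1 - s ^ 2) * x - 1 = (x - u) / u := by
      field_simp
      linear_combination x * hus
    rw [hD]
    push_cast
    field_simp
    linear_combination (-2) * hR2 + 2 * u ^ 2 * s ^ 2 * I_sq + 2 * u * hus

theorem integral_sqrt_mul_one_sub_div_sub_sq {s u : ℂ} (hs : 0 < s.re)
    (hus : u * (1 - s ^ 2) = 1) :
    ∫ x in (0 : ℝ)..1, (√(x * (1 - x)) : ℂ) / (x - u) ^ 2 = π * (1 - s) ^ 2 / (2 * s) := by
  have hu := notMem_image_ofReal_Icc_of_mul_one_sub_sq_eq_one hs hus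
  have hu0 : u ≠ 0 := left_ne_zero_of_mul_eq_one hus
  have hs0 : s ≠ 0 := ne_zero_of_re_pos hs
  have hxu : ∀ x ∈ Icc (0 : ℝ) 1, (x : ℂ) - u ≠ 0 := fun x hx =>
    sub_ne_zero.2 fun h => hu ⟨x, hx, h⟩
  rw [integral_eq_sub_of_hasDerivAt_of_le zero_le_one
    (f := fun x => -((√(x * (1 - x)) : ℂ) / (x - u)) - arcsin (2 * x - 1)
      + I * (1 + s ^ 2) / (2 * s) * logQuot s x)
    ?_ ?_ (intervalIntegrable_div_sub_pow (by fun_prop) (by rwa [uIcc_of_le zero_le_one]) 2)]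
  · norm_num [logQuot_zero, logQuot_one]
    field_simp
    linear_combination (-(1 + s ^ 2)) * I_sq
  · exact ((ContinuousOn.div (by fun_prop) (by fun_prop) hxu).neg.sub (by fun_prop)).add
      ((continuousOn_logQuot hs).const_mul _)
  · intro x hx
    refine ((((hasDerivAt_sqrt_mul_one_sub hx).ofReal_comp.div
      ((hasDerivAt_id' x).ofReal_comp.sub_const u) (hxu x (Ioo_subset_Icc_self hx))).neg.sub
      (hasDerivAt_arcsin_two_mul_sub_one hx).ofReal_comp).add
      ((hasDerivAt_logQuot hs hx).const_mul _)).congr_deriv ?_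
    have hR : (√(x * (1 - x)) : ℂ) ≠ 0 :=
      ofReal_ne_zero.2 (Real.sqrt_pos.2 (by nlinarith [hx.1, hx.2])).ne'
    have hD : (1 - s ^ 2) * x - 1 = (x - u) / u := by
      field_simp
      linear_combination x * hus
    have hx_ne := hxu x (Ioo_subset_Icc_self hx)
    rw [hD]
    push_cast
    field_simp
    linear_combination (u * x - u ^ 2) * (1 + s ^ 2) * I_sq + (x - u) * hus

theorem integral_div_sub_mul_sub {f : ℝ → ℂ} (hf : Continuous f) {a b : ℝ} {u v : ℂ}
    (hu : u ∉ ofReal '' [[a, b]]) (hv : v ∉ ofReal '' [[a, b]]) (huv : u ≠ v) :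
    ∫ x in a..b, f x / ((x - u) * (x - v)) =
      ((∫ x in a..b, f x / (x - u)) - ∫ x in a..b, f x / (x - v)) / (u - v) := by
  rw [← integral_sub (by simpa using intervalIntegrable_div_sub_pow hf hu 1)
    (by simpa using intervalIntegrable_div_sub_pow hf hv 1), ← intervalIntegral.integral_div]
  refine integral_congr fun x hx => ?_
  have hxu : (x : ℂ) - u ≠ 0 := sub_ne_zero.2 fun h => hu ⟨x, hx, h⟩
  have hxv : (x : ℂ) - v ≠ 0 := sub_ne_zero.2 fun h => hv ⟨x, hx, h⟩
  field_simp
  ring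

/-- the `d = 2` Stieltjes-transform identity. For
`u, v ∈ ℂ \ [0,1]`, with `s = √(1-1/u)`, `t = √(1-1/v)` (principal branch),
`32 / (uv(1+s)(1+t)(s+t)) = (32/π) ∫₀¹ √(x(1-x)) / ((x-u)(x-v)) dx`. -/
theorem stieltjes_transform_d_two
    (u v : ℂ)
    (hu : u ∉ Complex.ofReal '' Set.Icc (0 : ℝ) 1)
    (hv : v ∉ Complex.ofReal '' Set.Icc (0 : ℝ) 1)
    (s t : ℂ)
    (hs : s = ((1 : ℂ) - 1 / u) ^ ((1 : ℂ) / 2))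
    (ht : t = ((1 : ℂ) - 1 / v) ^ ((1 : ℂ) / 2)) :
    32 / (u * v * (1 + s) * (1 + t) * (s + t)) =
      (32 / (Real.pi : ℂ)) *
        ∫ x in (0:ℝ)..1,
          (Real.sqrt (x * (1 - x)) : ℂ) / (((x : ℂ) - u) * ((x : ℂ) - v)) := by
  have hs_re : 0 < s.re := hs ▸ re_cpow_one_half_pos (one_sub_one_div_mem_slitPlane hu)
  have ht_re : 0 < t.re := ht ▸ re_cpow_one_half_pos (one_sub_one_div_mem_slitPlane hv)
  have hu0 : u ≠ 0 := fun h => hu ⟨0, by simp, by simp [h]⟩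
  have hv0 : v ≠ 0 := fun h => hv ⟨0, by simp, by simp [h]⟩
  have hus : u * (1 - s ^ 2) = 1 := by
    simp only [hs, one_div, cpow_ofNat_inv_pow, sub_sub_cancel]; field_simp
  have hvt : v * (1 - t ^ 2) = 1 := by
    simp only [ht, one_div, cpow_ofNat_inv_pow, sub_sub_cancel]; field_simp
  have h1s : 1 + s ≠ 0 := ne_zero_of_re_pos (by rw [add_re, one_re]; linarith)
  have h1t : 1 + t ≠ 0 := ne_zero_of_re_pos (by rw [add_re, one_re]; linarith)
  have hst : s + t ≠ 0 := ne_zero_of_re_pos (by rw [add_re]; linarith)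
  rcases eq_or_ne u v with rfl | huv
  · obtain rfl : s = t := hs.trans ht.symm
    have hs0 : s ≠ 0 := ne_zero_of_re_pos hs_re
    simp_rw [← sq, integral_sqrt_mul_one_sub_div_sub_sq hs_re hus]
    field_simp
    linear_combination (-2) * (u * (1 - s ^ 2) + 1) * hus
  · rw [integral_div_sub_mul_sub (by fun_prop) (by rwa [uIcc_of_le zero_le_one])
      (by rwa [uIcc_of_le zero_le_one]) huv, integral_sqrt_mul_one_sub_div_sub hs_re hus,
      integral_sqrt_mul_one_sub_div_sub ht_re hvt]
    field_simp
    linear_combination 2 * (v * hus - u * hvt)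
end
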